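/- The extracted graphs are safe: if s → s', G or s ⇓ s', G in the graph-generating environment semantics, then the size-change graph G is safe for the pair of states (s, s'). -/

import Mathlib

/- Untyped λ-expressions. -/
inductive Exp : Type
  | var : String → Exp
  | app : Exp → Exp → Exp
  | lam : String → Exp → Exp
deriving DecidableEq

namespace Exp

/-- Free variables. -/
def fv : Exp → Finset String
  | var x => {x}
  | app e1 e2 => fv e1 ∪ fv e2
  | lam x e => fv e \ {x}

/-- The set of subexpressions of a λ-expression. -/
def subexp : Exp → Set Exp
  | var x => {var x}
  | app e1 e2 => insert (app e1 e2) (subexp e1 ∪ subexp e2)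
  | lam x e => insert (lam x e) (subexp e)

end Exp

/- Values (closures), environments and states of the environment-based
semantics.  An environment is a (partial) map from variable names to values;
a state `e:ρ` pairs an expression with an environment. -/
inductive Val : Type
  | clos : String → Exp → (String → Option Val) → Val

abbrev Env := String → Option Val
abbrev State := Exp × Env

/-- A value `λx.e:ρ` viewed as a state. -/
def Val.toState : Val → State
  | .clos x e ρ => (Exp.lam x e, ρ)

/-- The λ-expression component of a value. -/
def Val.toExp : Val → Exp
  | .clos x e _ => Exp.lam x e

def Env.update (ρ : Env) (x : String) (v : Val) : Env :=
  fun y => if y = x then some v else ρ y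

def Env.empty : Env := fun _ => none
/-- `Supp s s'` means `s' ∈ support(s)`, where
`support(e:ρ) = {e:ρ} ∪ ⋃_{x ∈ fv(e)} support(ρ(x))`. -/
inductive Supp : State → State → Prop
  | refl (s : State) : Supp s s
  | env {e : Exp} {ρ : Env} {x : String} {v : Val} {s' : State} :
      x ∈ e.fv → ρ x = some v → Supp v.toState s' → Supp (e, ρ) s'

/-- `s₁ ≻₁ s₂`: `s₂` is in the support of `s₁` and `s₁ ≠ s₂`. -/
def Gt1 (s1 s2 : State) : Prop := Supp s1 s2 ∧ s1 ≠ s2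

/-- `e₁:ρ₁ ≻₂ e₂:ρ₂`: `e₂` is a subexpression of `e₁`, `e₁ ≠ e₂`, and the
environments agree on `fv(e₂)`. -/
def Gt2 (s1 s2 : State) : Prop :=
  s2.1 ∈ Exp.subexp s1.1 ∧ s1.1 ≠ s2.1 ∧ ∀ x ∈ s2.1.fv, s1.2 x = s2.2 x

/-- `⪰` is the transitive closure of `≻₁ ∪ ≻₂ ∪ =`. -/
def Geq : State → State → Prop :=
  Relation.TransGen (fun s1 s2 => Gt1 s1 s2 ∨ Gt2 s1 s2 ∨ s1 = s2)

/-- `s₁ ≻ s₂` iff `s₁ ⪰ s₂` and `s₁ ≠ s₂`. -/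
def Gt (s1 s2 : State) : Prop := Geq s1 s2 ∧ s1 ≠ s2
/-- `GB s p` means the name path `p` belongs to the graph basis `gb(s)`:
`gb(e:ρ) = {ε} ∪ { xp | x ∈ fv(e), p ∈ gb(ρ(x)) }`. -/
inductive GB : State → List String → Prop
  | nil (s : State) : GB s []
  | cons {e : Exp} {ρ : Env} {x : String} {v : Val} {p : List String} :
      x ∈ e.fv → ρ x = some v → GB v.toState p → GB (e, ρ) (x :: p)

/-- `Valn s p s'` means `s̄(p) = s'`, the substate of `s` identified by the
name path `p`:  `s̄(ε) = s` and `(e:ρ)‾(xp) = (ρ(x))‾(p)`. -/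
inductive Valn : State → List String → State → Prop
  | nil (s : State) : Valn s [] s
  | cons {e : Exp} {ρ : Env} {x : String} {v : Val} {p : List String} {s' : State} :
      ρ x = some v → Valn v.toState p s' → Valn (e, ρ) (x :: p) s'
/-- Arc labels: `=` (eq) and `↓` (dec). -/
inductive Lab : Type
  | eq : Lab
  | dec : Lab
deriving DecidableEq

/-- Name paths; here the nodes of generated size-change graphs are `ε = []`
or single variables `[y]`. -/
abbrev NP := List String
abbrev Arc := NP × Lab × NP
abbrev ArcSet := Set Arc

/-- `id= = {ε =→ ε} ∪ {y =→ y | y ∈ s}`. -/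
def idEqS (s : Set String) : ArcSet :=
  {a | a = ([], Lab.eq, []) ∨ ∃ y ∈ s, a = ([y], Lab.eq, [y])}

/-- `id↓ = {ε ↓→ ε} ∪ {y =→ y | y ∈ s}`. -/
def idDecS (s : Set String) : ArcSet :=
  {a | a = ([], Lab.dec, []) ∨ ∃ y ∈ s, a = ([y], Lab.eq, [y])}

/-- The graph `{x =→ ε} ∪ {x ↓→ y | y ∈ s}` of the variable rule. -/
def varGraphS (x : String) (s : Set String) : ArcSet :=
  {a | a = ([x], Lab.eq, []) ∨ ∃ y ∈ s, a = ([x], Lab.dec, [y])}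

/-- `G₁^{-ε/λx.e₀}`: keep arcs between variables, replace `ε r→ z` (`z` a
variable) by `ε ↓→ z`, and, when `x ∉ fv(e₀)`, additionally replace each
arc `p r→ ε` by `p ↓→ ε`.  (`fve0` is `fv(e₀)`.) -/
def GminusS (x : String) (fve0 : Set String) (G1 : ArcSet) : ArcSet :=
  {a | (∃ (y : String) (r : Lab) (z : String), a = ([y], r, [z]) ∧ ([y], r, [z]) ∈ G1) ∨
       (∃ z : String, a = (([] : NP), Lab.dec, [z]) ∧ ∃ r, (([] : NP), r, [z]) ∈ G1) ∨
       (x ∉ fve0 ∧ ∃ p : NP, a = (p, Lab.dec, ([] : NP)) ∧ ∃ r, (p, r, ([] : NP)) ∈ G1)}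

/-- `G₂^{ε↦x}`: `y r→ x` for each `y r→ ε ∈ G₂`, and `ε ↓→ x` for each
`ε r→ ε ∈ G₂`. -/
def GepsS (x : String) (G2 : ArcSet) : ArcSet :=
  {a | (∃ (y : String) (r : Lab), a = ([y], r, [x]) ∧ ([y], r, ([] : NP)) ∈ G2) ∨
       (a = (([] : NP), Lab.dec, [x]) ∧ ∃ r, (([] : NP), r, ([] : NP)) ∈ G2)}

/-- `∪_{e₀}`: union restricted to arcs whose target is in `fv(e₀) ∪ {ε}`. -/
def unionRS (fve0 : Set String) (A B : ArcSet) : ArcSet :=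
  {a | a ∈ A ∪ B ∧ (a.2.2 = ([] : NP) ∨ ∃ y ∈ fve0, a.2.2 = [y])}

/-- The label set `R(x,z)` used in graph composition. -/
def labelsA (G1 G2 : ArcSet) (x z : NP) : Set Lab :=
  {r | ∃ y s, ((x, r, y) ∈ G1 ∧ (y, s, z) ∈ G2) ∨
              ((x, s, y) ∈ G1 ∧ (y, r, z) ∈ G2)}

/-- Composition `G₁;G₂` of size-change graphs (as arc sets): `x ↓→ z` whenever
`↓ ∈ R(x,z)`, and `x =→ z` whenever `R(x,z) = {=}`. -/
def compA (G1 G2 : ArcSet) : ArcSet :=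
  {a | (∃ x z, a = (x, Lab.dec, z) ∧ Lab.dec ∈ labelsA G1 G2 x z) ∨
       (∃ x z, a = (x, Lab.eq, z) ∧ labelsA G1 G2 x z = {Lab.eq})}
/- The graph-generating environment semantics:
judgements `e:ρ ⇓ v, G` and `e:ρ →x e':ρ', G` (x ∈ {r,d,c}). -/
mutual
  inductive EvalG : State → Val → ArcSet → Prop
    | value (x : String) (e : Exp) (ρ : Env) :
        EvalG (Exp.lam x e, ρ) (Val.clos x e ρ) (idEqS ↑(Exp.lam x e).fv)
    | var {ρ : Env} {x : String} {v : Val} :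
        ρ x = some v → EvalG (Exp.var x, ρ) v (varGraphS x ↑v.toExp.fv)
    | apply {s s' : State} {v : Val} {G' G : ArcSet} :
        CallGc s s' G' → EvalG s' v G → EvalG s v (compA G' G)
  inductive CallGc : State → State → ArcSet → Prop
    | call {e1 e2 : Exp} {ρ ρ0 : Env} {x : String} {e0 : Exp} {v2 : Val}
        {G1 G2 : ArcSet} :
        EvalG (e1, ρ) (Val.clos x e0 ρ0) G1 → EvalG (e2, ρ) v2 G2 →
        CallGc (Exp.app e1 e2, ρ) (e0, Env.update ρ0 x v2)
          (unionRS ↑e0.fv (GminusS x ↑e0.fv G1) (GepsS x G2))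
end

inductive CallGr : State → State → ArcSet → Prop
  | oper (e1 e2 : Exp) (ρ : Env) :
      CallGr (Exp.app e1 e2, ρ) (e1, ρ) (idDecS ↑e1.fv)

inductive CallGd : State → State → ArcSet → Prop
  | opnd {e1 : Exp} {ρ : Env} {v1 : Val} {G1 : ArcSet} (e2 : Exp) :
      EvalG (e1, ρ) v1 G1 → CallGd (Exp.app e1 e2, ρ) (e2, ρ) (idDecS ↑e2.fv)

/-- The graph-generating call relation (union of `→r`, `→d`, `→c`). -/
def CallGAny (s s' : State) (G : ArcSet) : Prop :=
  CallGr s s' G ∨ CallGd s s' G ∨ CallGc s s' G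
/-- A (generated) size-change graph, given by its arcs, is safe for the pair
of states `(s₁,s₂)`: `p₁ =→ p₂ ∈ G` implies `s̄₁(p₁) = s̄₂(p₂)`, and
`p₁ ↓→ p₂ ∈ G` implies `s̄₁(p₁) ≻ s̄₂(p₂)`. -/
def SafeArcs (G : ArcSet) (s1 s2 : State) : Prop :=
  (∀ p1 p2, (p1, Lab.eq, p2) ∈ G →
    ∀ t1 t2, Valn s1 p1 t1 → Valn s2 p2 t2 → t1 = t2) ∧
  (∀ p1 p2, (p1, Lab.dec, p2) ∈ G →
    ∀ t1 t2, Valn s1 p1 t1 → Valn s2 p2 t2 → Gt t1 t2)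

/-!
The proof is a mutual induction on derivations, for an invariant stronger than safety: besides
relating the valuations at its two ends as its label demands, every arc `p₁ r→ p₂` has its
source defined whenever its target is (so that an arc of `G₁;G₂` factors through a defined
middle state), and its target is `ε` or a free variable of the target expression (so that in the
call rule no target of `G₁` is the bound variable `x`).

Chaining `⪰`-steps does not by itself keep the end points distinct, so every `↓`-arc is
certified by a strict decrease of a lexicographic measure: the ordinal rank of the closures bound
to the free variables, then the size of the expression. Each descent made by the rules (to an
operator or operand, to a closure in the environment, under a binder that does not occur in the
body) decreases it.
-/

namespace Env

theorem update_self (ρ : Env) (x : String) (v : Val) : ρ.update x v x = some v := by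
  simp [Env.update]

theorem update_of_ne {ρ : Env} {x y : String} (v : Val) (h : y ≠ x) : ρ.update x v y = ρ y := by
  simp [Env.update, h]

end Env

theorem Exp.ne_of_mem_fv_lam {x y : String} {e : Exp} (h : y ∈ (Exp.lam x e).fv) : y ≠ x := by
  simp only [Exp.fv, Finset.mem_sdiff, Finset.mem_singleton] at h
  exact h.2

theorem Exp.self_mem_subexp (e : Exp) : e ∈ e.subexp := by
  cases e <;> simp [Exp.subexp]

namespace Valn

theorem eq_of_nil {s t : State} (h : Valn s [] t) : t = s := by
  cases h; rfl

theorem cons_inv {e : Exp} {ρ : Env} {x : String} {p : List String} {t : State}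
    (h : Valn (e, ρ) (x :: p) t) : ∃ v, ρ x = some v ∧ Valn v.toState p t := by
  cases h with
  | cons hv hp => exact ⟨_, hv, hp⟩

theorem singleton_inv {s : State} {y : String} {t : State} (h : Valn s [y] t) :
    ∃ v, s.2 y = some v ∧ t = v.toState := by
  cases h with
  | cons hv hp => exact ⟨_, hv, hp.eq_of_nil⟩

theorem functional {s : State} {p : List String} {t₁ t₂ : State}
    (h₁ : Valn s p t₁) (h₂ : Valn s p t₂) : t₁ = t₂ := by
  induction h₁ generalizing t₂ with
  | nil => exact h₂.eq_of_nil.symm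
  | cons hv _ ih =>
    obtain ⟨v', hv', hp'⟩ := h₂.cons_inv
    cases hv.symm.trans hv'
    exact ih hp'

theorem cons_congr {e e' : Exp} {ρ ρ' : Env} {x : String} {p : List String} {t : State}
    (hx : ρ x = ρ' x) (h : Valn (e, ρ) (x :: p) t) : Valn (e', ρ') (x :: p) t := by
  obtain ⟨v, hv, hp⟩ := h.cons_inv
  exact .cons (hx ▸ hv) hp

theorem exists_of_exp_change {e : Exp} {ρ : Env} {p : List String} {t : State} (e' : Exp)
    (h : Valn (e, ρ) p t) : ∃ t', Valn (e', ρ) p t' := by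
  cases p with
  | nil => exact ⟨_, .nil _⟩
  | cons x p => exact ⟨t, h.cons_congr rfl⟩

theorem eq_of_update_self {e : Exp} {ρ : Env} {x : String} {v : Val} {t : State}
    (h : Valn (e, ρ.update x v) [x] t) : t = v.toState := by
  obtain ⟨w, hw, rfl⟩ := h.singleton_inv
  cases (ρ.update_self x v).symm.trans hw
  rfl

end Valn

mutual

noncomputable def Val.rank : Val → Ordinal.{0}
  | .clos _ _ ρ => ⨆ y, Val.rankOpt (ρ y) + 1

noncomputable def Val.rankOpt : Option Val → Ordinal.{0}
  | none => 0
  | some v => v.rank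

end

noncomputable def State.rank (s : State) : Ordinal.{0} :=
  ⨆ y : s.1.fv, Val.rankOpt (s.2 y) + 1

noncomputable def State.measure (s : State) : Ordinal.{0} ×ₗ ℕ :=
  toLex (s.rank, sizeOf s.1)

theorem Val.rank_toState_le (v : Val) : v.toState.rank ≤ v.rank := by
  obtain ⟨x, e, ρ⟩ := v
  rw [Val.rank]
  exact Ordinal.iSup_add_one_le fun y => Ordinal.lt_iSup_add_one (fun z => Val.rankOpt (ρ z)) y

theorem State.rank_lt_of_lookup {e : Exp} {ρ : Env} {y : String} {v : Val}
    (hy : y ∈ e.fv) (hv : ρ y = some v) : v.toState.rank < State.rank (e, ρ) := by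
  have h := Ordinal.lt_iSup_add_one (fun z : e.fv => Val.rankOpt (ρ z)) ⟨y, hy⟩
  simp only [hv, Val.rankOpt] at h
  exact v.rank_toState_le.trans_lt h

theorem State.rank_le_of_agree {e e' : Exp} {ρ ρ' : Env} (hfv : e'.fv ⊆ e.fv)
    (hagree : ∀ y ∈ e'.fv, ρ y = ρ' y) : State.rank (e', ρ') ≤ State.rank (e, ρ) :=
  Ordinal.iSup_add_one_le fun y => by
    have h := Ordinal.lt_iSup_add_one (fun z : e.fv => Val.rankOpt (ρ z)) ⟨y, hfv y.2⟩
    rw [hagree y y.2] at h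
    exact h

def StrictGt (s₁ s₂ : State) : Prop :=
  Geq s₁ s₂ ∧ s₂.measure < s₁.measure

theorem StrictGt.gt {s₁ s₂ : State} (h : StrictGt s₁ s₂) : Gt s₁ s₂ :=
  ⟨h.1, fun he => (he ▸ h.2).false⟩

theorem StrictGt.trans {s₁ s₂ s₃ : State} (h₁ : StrictGt s₁ s₂) (h₂ : StrictGt s₂ s₃) :
    StrictGt s₁ s₃ :=
  ⟨h₁.1.trans h₂.1, h₂.2.trans h₁.2⟩

theorem strictGt_of_lookup {e : Exp} {ρ : Env} {y : String} {v : Val}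
    (hy : y ∈ e.fv) (hv : ρ y = some v) : StrictGt (e, ρ) v.toState := by
  have hlt := State.rank_lt_of_lookup hy hv
  refine ⟨.single (Or.inl ⟨.env hy hv (.refl _), fun he => ?_⟩), Prod.Lex.left _ _ hlt⟩
  exact hlt.ne (congrArg State.rank he).symm

theorem strictGt_of_subexp {e e' : Exp} {ρ ρ' : Env} (hsub : e' ∈ e.subexp)
    (hsize : sizeOf e' < sizeOf e) (hfv : e'.fv ⊆ e.fv) (hagree : ∀ y ∈ e'.fv, ρ y = ρ' y) :
    StrictGt (e, ρ) (e', ρ') := by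
  refine ⟨.single (Or.inr (Or.inl ⟨hsub, fun he => hsize.ne' (congrArg sizeOf he), hagree⟩)), ?_⟩
  rcases (State.rank_le_of_agree hfv hagree).lt_or_eq with hlt | heq
  · exact Prod.Lex.left _ _ hlt
  · exact Prod.Lex.toLex_lt_toLex.2 (Or.inr ⟨heq, hsize⟩)

theorem strictGt_app_left (e₁ e₂ : Exp) (ρ : Env) : StrictGt (Exp.app e₁ e₂, ρ) (e₁, ρ) :=
  strictGt_of_subexp (by simp [Exp.subexp, e₁.self_mem_subexp]) (by simp; omega)
    (by simp [Exp.fv]) fun _ _ => rfl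

theorem strictGt_app_right (e₁ e₂ : Exp) (ρ : Env) : StrictGt (Exp.app e₁ e₂, ρ) (e₂, ρ) :=
  strictGt_of_subexp (by simp [Exp.subexp, e₂.self_mem_subexp]) (by simp)
    (by simp [Exp.fv]) fun _ _ => rfl

theorem strictGt_lam_body {x : String} {e : Exp} (ρ : Env) (v : Val) (hx : x ∉ e.fv) :
    StrictGt (Exp.lam x e, ρ) (e, ρ.update x v) :=
  strictGt_of_subexp (by simp [Exp.subexp, e.self_mem_subexp]) (by simp)
    (fun y hy => by simpa [Exp.fv] using ⟨hy, ne_of_mem_of_not_mem hy hx⟩)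
    fun y hy => (Env.update_of_ne v (ne_of_mem_of_not_mem hy hx)).symm

def Lab.Holds : Lab → State → State → Prop
  | .eq, s₁, s₂ => s₁ = s₂
  | .dec, s₁, s₂ => StrictGt s₁ s₂

theorem Lab.Holds.trans_strictGt {r : Lab} {s₁ s₂ s₃ : State} (h₁ : r.Holds s₁ s₂)
    (h₂ : StrictGt s₂ s₃) : StrictGt s₁ s₃ := by
  cases r with
  | eq => exact (show s₁ = s₂ from h₁) ▸ h₂
  | dec => exact StrictGt.trans h₁ h₂

theorem StrictGt.trans_holds {r : Lab} {s₁ s₂ s₃ : State} (h₁ : StrictGt s₁ s₂)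
    (h₂ : r.Holds s₂ s₃) : StrictGt s₁ s₃ := by
  cases r with
  | eq => exact (show s₂ = s₃ from h₂) ▸ h₁
  | dec => exact h₁.trans h₂

theorem exists_of_mem_compA {G₁ G₂ : ArcSet} {p₁ p₂ : NP} {r : Lab}
    (h : (p₁, r, p₂) ∈ compA G₁ G₂) :
    ∃ q r₁ r₂, (p₁, r₁, q) ∈ G₁ ∧ (q, r₂, p₂) ∈ G₂ ∧
      (r = .eq ∧ r₁ = .eq ∧ r₂ = .eq ∨ r = .dec ∧ (r₁ = .dec ∨ r₂ = .dec)) := by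
  rcases h with ⟨_, _, he, q, s, ⟨h₁, h₂⟩ | ⟨h₁, h₂⟩⟩ | ⟨_, _, he, hlabels⟩ <;> cases he
  · exact ⟨q, _, _, h₁, h₂, Or.inr ⟨rfl, Or.inl rfl⟩⟩
  · exact ⟨q, _, _, h₁, h₂, Or.inr ⟨rfl, Or.inr rfl⟩⟩
  · obtain ⟨q, s, ⟨h₁, h₂⟩ | ⟨h₁, h₂⟩⟩ : Lab.eq ∈ labelsA G₁ G₂ p₁ p₂ := hlabels ▸ rfl
    · have hs : s ∈ labelsA G₁ G₂ p₁ p₂ := ⟨q, _, Or.inr ⟨h₁, h₂⟩⟩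
      exact ⟨q, _, _, h₁, h₂, Or.inl ⟨rfl, rfl, by simpa [hlabels] using hs⟩⟩
    · have hs : s ∈ labelsA G₁ G₂ p₁ p₂ := ⟨q, _, Or.inl ⟨h₁, h₂⟩⟩
      exact ⟨q, _, _, h₁, h₂, Or.inl ⟨rfl, by simpa [hlabels] using hs, rfl⟩⟩

structure GraphSound (G : ArcSet) (s₁ s₂ : State) : Prop where
  holds : ∀ ⦃p₁ r p₂ t₁ t₂⦄, (p₁, r, p₂) ∈ G → Valn s₁ p₁ t₁ → Valn s₂ p₂ t₂ → r.Holds t₁ t₂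
  source_defined : ∀ ⦃p₁ r p₂ t₂⦄, (p₁, r, p₂) ∈ G → Valn s₂ p₂ t₂ → ∃ t₁, Valn s₁ p₁ t₁

def TargetsInFv (G : ArcSet) (e : Exp) : Prop :=
  ∀ ⦃p₁ r p₂⦄, (p₁, r, p₂) ∈ G → p₂ = [] ∨ ∃ y ∈ e.fv, p₂ = [y]

theorem TargetsInFv.mem_fv {G : ArcSet} {e : Exp} (h : TargetsInFv G e) {p : NP} {r : Lab}
    {z : String} (ha : (p, r, [z]) ∈ G) : z ∈ e.fv := by
  rcases h ha with h | ⟨y, hy, h⟩ <;> cases h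
  exact hy

theorem GraphSound.safeArcs {G : ArcSet} {s₁ s₂ : State} (h : GraphSound G s₁ s₂) :
    SafeArcs G s₁ s₂ :=
  ⟨fun _ _ ha _ _ h₁ h₂ => h.holds ha h₁ h₂, fun _ _ ha _ _ h₁ h₂ => (h.holds ha h₁ h₂).gt⟩

theorem GraphSound.comp {G₁ G₂ : ArcSet} {s₁ s₂ s₃ : State} (h₁ : GraphSound G₁ s₁ s₂)
    (h₂ : GraphSound G₂ s₂ s₃) : GraphSound (compA G₁ G₂) s₁ s₃ where
  holds _ _ _ _ _ ha ht₁ ht₃ := by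
    obtain ⟨q, r₁, r₂, ha₁, ha₂, hr⟩ := exists_of_mem_compA ha
    obtain ⟨t₂, ht₂⟩ := h₂.source_defined ha₂ ht₃
    have hh₁ := h₁.holds ha₁ ht₁ ht₂
    have hh₂ := h₂.holds ha₂ ht₂ ht₃
    rcases hr with ⟨rfl, rfl, rfl⟩ | ⟨rfl, rfl | rfl⟩
    · exact (show _ = _ from hh₁).trans hh₂
    · exact StrictGt.trans_holds hh₁ hh₂
    · exact hh₁.trans_strictGt hh₂
  source_defined _ _ _ _ ha ht₃ := by
    obtain ⟨q, r₁, r₂, ha₁, ha₂, -⟩ := exists_of_mem_compA ha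
    obtain ⟨t₂, ht₂⟩ := h₂.source_defined ha₂ ht₃
    exact h₁.source_defined ha₁ ht₂

theorem TargetsInFv.comp {G₁ G₂ : ArcSet} {e : Exp} (h : TargetsInFv G₂ e) :
    TargetsInFv (compA G₁ G₂) e := fun _ _ _ ha =>
  let ⟨_, _, _, _, ha₂, _⟩ := exists_of_mem_compA ha
  h ha₂

theorem GraphSound.unionRS {F : Set String} {A B : ArcSet} {s₁ s₂ : State}
    (hA : GraphSound A s₁ s₂) (hB : GraphSound B s₁ s₂) : GraphSound (unionRS F A B) s₁ s₂ where
  holds _ _ _ _ _ ha := ha.1.elim (hA.holds ·) (hB.holds ·)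
  source_defined _ _ _ _ ha := ha.1.elim (hA.source_defined ·) (hB.source_defined ·)

theorem targetsInFv_unionRS (e : Exp) (A B : ArcSet) : TargetsInFv (unionRS ↑e.fv A B) e :=
  fun _ _ _ ha => ha.2

theorem graphSound_idEqS (F : Set String) (s : State) : GraphSound (idEqS F) s s where
  holds _ _ _ _ _ ha h₁ h₂ := by
    rcases ha with h | ⟨y, -, h⟩ <;> cases h <;> exact h₁.functional h₂
  source_defined _ _ _ t ha h := by
    rcases ha with h | ⟨y, -, h⟩ <;> cases h <;> exact ⟨t, h⟩

theorem targetsInFv_idEqS (e : Exp) : TargetsInFv (idEqS ↑e.fv) e := fun _ _ _ ha => by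
  rcases ha with h | ⟨y, hy, h⟩ <;> cases h
  exacts [Or.inl rfl, Or.inr ⟨y, hy, rfl⟩]

theorem graphSound_idDecS {e e' : Exp} {ρ : Env} (F : Set String) (h : StrictGt (e, ρ) (e', ρ)) :
    GraphSound (idDecS F) (e, ρ) (e', ρ) where
  holds _ _ _ _ _ ha h₁ h₂ := by
    rcases ha with ha | ⟨y, -, ha⟩ <;> cases ha
    · rw [h₁.eq_of_nil, h₂.eq_of_nil]
      exact h
    · exact (h₁.cons_congr rfl).functional h₂
  source_defined _ _ _ _ ha h₂ := by
    rcases ha with ha | ⟨y, -, ha⟩ <;> cases ha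
    · exact ⟨_, .nil _⟩
    · exact ⟨_, h₂.cons_congr rfl⟩

theorem graphSound_varGraphS {ρ : Env} {x : String} {v : Val} (hx : ρ x = some v) :
    GraphSound (varGraphS x ↑v.toExp.fv) (Exp.var x, ρ) v.toState where
  holds _ _ _ _ _ ha h₁ h₂ := by
    rcases ha with ha | ⟨y, hy, ha⟩ <;> cases ha <;>
      obtain ⟨w, hw, rfl⟩ := h₁.singleton_inv <;> cases hx.symm.trans hw
    · exact h₂.eq_of_nil.symm
    · obtain ⟨x', e, ρ'⟩ := v
      obtain ⟨u, hu, rfl⟩ := h₂.singleton_inv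
      exact strictGt_of_lookup hy hu
  source_defined _ _ _ _ ha _ := by
    rcases ha with ha | ⟨y, -, ha⟩ <;> cases ha <;> exact ⟨_, .cons hx (.nil _)⟩

theorem targetsInFv_varGraphS (x : String) (v : Val) :
    TargetsInFv (varGraphS x ↑v.toExp.fv) v.toExp := fun _ _ _ ha => by
  rcases ha with h | ⟨y, hy, h⟩ <;> cases h
  exacts [Or.inl rfl, Or.inr ⟨y, hy, rfl⟩]

theorem graphSound_GminusS {G₁ : ArcSet} {e₁ e₂ e₀ : Exp} {ρ ρ₀ : Env} {x : String} (v₂ : Val)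
    (h₁ : GraphSound G₁ (e₁, ρ) (Exp.lam x e₀, ρ₀)) (ht₁ : TargetsInFv G₁ (Exp.lam x e₀)) :
    GraphSound (GminusS x ↑e₀.fv G₁) (Exp.app e₁ e₂, ρ) (e₀, ρ₀.update x v₂) := by
  have restore : ∀ ⦃p r z t⦄, (p, r, [z]) ∈ G₁ → Valn (e₀, ρ₀.update x v₂) [z] t →
      Valn (Exp.lam x e₀, ρ₀) [z] t := fun _ _ _ _ ha ht =>
    ht.cons_congr (Env.update_of_ne v₂ (Exp.ne_of_mem_fv_lam (ht₁.mem_fv ha)))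
  constructor
  · intro p₁ _ _ t₁ t₂ ha h₁' h₂'
    rcases ha with ⟨y, r, z, ha, hG⟩ | ⟨z, ha, r, hG⟩ | ⟨hx, _, ha, r, hG⟩ <;> cases ha
    · exact h₁.holds hG (h₁'.cons_congr rfl) (restore hG h₂')
    · obtain rfl := h₁'.eq_of_nil
      exact (strictGt_app_left e₁ e₂ ρ).trans_holds (h₁.holds hG (.nil _) (restore hG h₂'))
    · obtain rfl := h₂'.eq_of_nil
      have hbody := strictGt_lam_body ρ₀ v₂ (show x ∉ e₀.fv from hx)
      cases p₁ with
      | nil =>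
        obtain rfl := h₁'.eq_of_nil
        exact ((strictGt_app_left e₁ e₂ ρ).trans_holds (h₁.holds hG (.nil _) (.nil _))).trans hbody
      | cons y q => exact (h₁.holds hG (h₁'.cons_congr rfl) (.nil _)).trans_strictGt hbody
  · intro _ _ _ t₂ ha h₂'
    rcases ha with ⟨y, r, z, ha, hG⟩ | ⟨z, ha, r, hG⟩ | ⟨-, _, ha, r, hG⟩ <;> cases ha
    · exact (h₁.source_defined hG (restore hG h₂')).elim fun _ ht => ht.exists_of_exp_change _
    · exact (h₁.source_defined hG (restore hG h₂')).elim fun _ ht => ht.exists_of_exp_change _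
    · exact (h₁.source_defined hG (.nil _)).elim fun _ ht => ht.exists_of_exp_change _

theorem graphSound_GepsS {G₂ : ArcSet} {e₁ e₂ e₀ : Exp} {ρ ρ₀ : Env} {x : String} {v₂ : Val}
    (h₂ : GraphSound G₂ (e₂, ρ) v₂.toState) :
    GraphSound (GepsS x G₂) (Exp.app e₁ e₂, ρ) (e₀, ρ₀.update x v₂) := by
  constructor
  · intro _ _ _ t₁ t₂ ha h₁' h₂'
    rcases ha with ⟨y, r, ha, hG⟩ | ⟨ha, r, hG⟩ <;> cases ha <;> obtain rfl := h₂'.eq_of_update_self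
    · exact h₂.holds hG (h₁'.cons_congr rfl) (.nil _)
    · obtain rfl := h₁'.eq_of_nil
      exact (strictGt_app_right e₁ e₂ ρ).trans_holds (h₂.holds hG (.nil _) (.nil _))
  · intro _ _ _ t₂ ha _
    rcases ha with ⟨y, r, ha, hG⟩ | ⟨ha, r, hG⟩ <;> cases ha <;>
      exact (h₂.source_defined hG (.nil _)).elim fun _ ht => ht.exists_of_exp_change _

mutual

theorem EvalG.graphSound {s : State} {v : Val} {G : ArcSet} :
    EvalG s v G → GraphSound G s v.toState ∧ TargetsInFv G v.toExp
  | .value x e ρ => ⟨graphSound_idEqS _ _, targetsInFv_idEqS _⟩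
  | .var hx => ⟨graphSound_varGraphS hx, targetsInFv_varGraphS _ _⟩
  | .apply hc he =>
    let ⟨hG, hT⟩ := he.graphSound
    ⟨hc.graphSound.1.comp hG, hT.comp⟩

theorem CallGc.graphSound {s s' : State} {G : ArcSet} :
    CallGc s s' G → GraphSound G s s' ∧ TargetsInFv G s'.1
  | .call h₁ h₂ =>
    let ⟨hG₁, hT₁⟩ := h₁.graphSound
    ⟨(graphSound_GminusS _ hG₁ hT₁).unionRS (graphSound_GepsS h₂.graphSound.1),
      targetsInFv_unionRS _ _ _⟩

end

/-- The extracted graphs are safe: if `s → s', G` or `s ⇓ s', G` in the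
graph-generating environment semantics, then `G` is safe for `(s,s')`. -/
theorem extracted_graphs_safe :
    (∀ (s s' : State) (G : ArcSet), CallGAny s s' G → SafeArcs G s s') ∧
    (∀ (s : State) (v : Val) (G : ArcSet), EvalG s v G → SafeArcs G s v.toState) := by
  refine ⟨?_, fun _ _ _ h => h.graphSound.1.safeArcs⟩
  rintro _ _ _ (⟨e₁, e₂, ρ⟩ | ⟨e₂, -⟩ | h)
  · exact (graphSound_idDecS _ (strictGt_app_left e₁ e₂ ρ)).safeArcs
  · exact (graphSound_idDecS _ (strictGt_app_right _ e₂ _)).safeArcs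
  · exact h.graphSound.1.safeArcs
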